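/- Let f : ℝ^d → ℝ satisfy the SPB growth estimate with parameters R₁, R₂, m, let x ∈ ℝ^d, σ > 0, and let p ≥ 1 be an integer. Define F(u) = σ^{−1}(f(x + σu) − f(x)) u. Then E_{u∼N(0,I)}[‖F(u)‖^p] ≤ ℋ_(p) (‖x‖^{mp} + 1), where ℋ_(p) = 3^{p−1} · max{ 2^{(m−1)p} R₁^p (2p+d)^p , R₂^p (2p+d)^p + 2^{(m−1)p} R₁^p σ^{mp} ((m+2)p + d)^{((m+2)p)/2} }. -/

import Mathlib

open MeasureTheory Filter Set
open scoped InnerProductSpace ENNReal Topology Real NNReal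

/-- The standard Gaussian probability measure `N(0, I)` on `ℝ^d`
(with density `(2π)^{-d/2} e^{-‖u‖²/2}`), realized as the product of `d`
standard one-dimensional Gaussians. -/
noncomputable def stdGaussian (d : ℕ) : Measure (EuclideanSpace ℝ (Fin d)) :=
  Measure.map (MeasurableEquiv.toLp 2 (Fin d → ℝ))
    (Measure.pi fun _ : Fin d => ProbabilityTheory.gaussianReal 0 1)

instance (d : ℕ) : IsProbabilityMeasure (stdGaussian d) :=
  Measure.isProbabilityMeasure_map (MeasurableEquiv.toLp 2 (Fin d → ℝ)).measurable.aemeasurable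

/-- `f` satisfies the SPB growth estimate with parameters `R1, R2, m`:
`|f x - f y| ≤ (2^{m-1} R₁ ‖x‖^m + 2^{m-1} R₁ ‖y-x‖^m + R₂) ‖x-y‖`. -/
def SPBGrowth {d : ℕ} (f : EuclideanSpace ℝ (Fin d) → ℝ) (R1 R2 : ℝ) (m : ℕ) : Prop :=
  ∀ x y : EuclideanSpace ℝ (Fin d),
    |f x - f y| ≤ ((2 : ℝ) ^ ((m : ℤ) - 1) * R1 * ‖x‖ ^ m
      + (2 : ℝ) ^ ((m : ℤ) - 1) * R1 * ‖y - x‖ ^ m + R2) * ‖x - y‖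

/-- The Gaussian smoothing `f_σ(x) = E_{u ∼ N(0,I)}[f (x + σ u)]`. -/
noncomputable def gsmooth {d : ℕ} (σ : ℝ) (f : EuclideanSpace ℝ (Fin d) → ℝ)
    (x : EuclideanSpace ℝ (Fin d)) : ℝ :=
  ∫ u, f (x + σ • u) ∂(stdGaussian d)

/-- The gradient of the Gaussian smoothing:
`∇f_σ(x) = σ⁻¹ E_{u ∼ N(0,I)}[f (x + σ u) u]`. -/
noncomputable def gsGrad {d : ℕ} (σ : ℝ) (f : EuclideanSpace ℝ (Fin d) → ℝ)
    (x : EuclideanSpace ℝ (Fin d)) : EuclideanSpace ℝ (Fin d) :=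
  σ⁻¹ • ∫ u, f (x + σ • u) • u ∂(stdGaussian d)

/-- The constant `ℋ_(p)` of Lemma 4.3. -/
noncomputable def spbH (d m p : ℕ) (R1 R2 σ : ℝ) : ℝ :=
  3 ^ (p - 1) * max ((2 : ℝ) ^ (((m : ℤ) - 1) * p) * R1 ^ p * ((2 * p + d : ℕ) : ℝ) ^ p)
    (R2 ^ p * ((2 * p + d : ℕ) : ℝ) ^ p +
      (2 : ℝ) ^ (((m : ℤ) - 1) * p) * R1 ^ p * σ ^ (m * p) *
        (((m + 2) * p + d : ℕ) : ℝ) ^ ((((m + 2) * p : ℕ) : ℝ) / 2))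

/-- The function `ℳ` of Lemma 4.2. -/
noncomputable def spbM {d : ℕ} (m : ℕ) (R1 R2 σ : ℝ) (x : EuclideanSpace ℝ (Fin d)) : ℝ :=
  ((2 : ℝ) ^ ((m : ℤ) - 1) * R1 * ‖x‖ ^ m + R2) * Real.sqrt d +
    (2 : ℝ) ^ ((m : ℤ) - 1) * R1 * σ ^ m * ((m + 1 + d : ℕ) : ℝ) ^ (((m : ℝ) + 1) / 2)

/-- The constant `𝒜`. -/
noncomputable def spbA (d m : ℕ) (R1 R2 σ : ℝ) : ℝ :=
  (2 : ℝ) ^ (2 * (m : ℤ) - 2) * R1 * σ ^ ((m : ℤ) - 1) *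
      ((m + 1 + d : ℕ) : ℝ) ^ (((m : ℝ) + 1) / 2) + σ⁻¹ * R2 * Real.sqrt d

/-- The constant `ℬ`. -/
noncomputable def spbB (d m : ℕ) (R1 σ : ℝ) : ℝ :=
  (2 : ℝ) ^ (2 * (m : ℤ) - 2) * σ⁻¹ * R1 * Real.sqrt d

/-- The constant `𝒞`. -/
noncomputable def spbC (d m : ℕ) (R1 σ : ℝ) : ℝ :=
  (2 : ℝ) ^ ((m : ℤ) - 1) * σ⁻¹ * R1 * Real.sqrt d

/-!
Putting `y = x + σu` in the SPB estimate bounds `‖F(u)‖` by `(A‖x‖^m + Aσ^m‖u‖^m + R₂)‖u‖²` with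
`A = 2^{m-1}R₁`, and `(a + b + c)^p ≤ 3^{p-1}(a^p + b^p + c^p)` reduces the claim to the Gaussian
moment bound `E‖u‖^k ≤ (k + d)^{k/2}`. The even moments are the chi-squared moments
`E‖u‖^{2q} = ∏_{i<q} (d + 2i)`: in one variable they follow from Gaussian integration by parts, and
the step from `d` to `d + 1` coordinates is the binomial theorem followed by the Chu–Vandermonde
identity for these rising products. An odd moment is controlled by the next even one through
Lyapunov's inequality.
-/

open Finset
open ProbabilityTheory (gaussianReal gaussianPDFReal integral_gaussianReal_eq_integral_smul
  memLp_id_gaussianReal)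

lemma integrable_pow_mul_exp_neg_sq_div_two (n : ℕ) :
    Integrable fun x : ℝ => x ^ n * Real.exp (-x ^ 2 / 2) := by
  have h := integrable_rpow_mul_exp_neg_mul_sq (b := 1 / 2) (by norm_num)
    (s := n) (by linarith [n.cast_nonneg (α := ℝ)])
  refine h.congr (ae_of_all _ fun x => ?_)
  simp only [Real.rpow_natCast]
  congr 2
  ring

lemma integral_pow_add_two_mul_exp_neg_sq_div_two (n : ℕ) :
    ∫ x : ℝ, x ^ (n + 2) * Real.exp (-x ^ 2 / 2)
      = (n + 1) * ∫ x : ℝ, x ^ n * Real.exp (-x ^ 2 / 2) := by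
  have hderiv : ∀ x : ℝ, HasDerivAt (fun x => x ^ (n + 1) * Real.exp (-x ^ 2 / 2))
      ((n + 1) * (x ^ n * Real.exp (-x ^ 2 / 2)) - x ^ (n + 2) * Real.exp (-x ^ 2 / 2)) x := by
    intro x
    have h := ((hasDerivAt_pow (n + 1) x).mul (((hasDerivAt_pow 2 x).neg.div_const 2).exp))
    refine h.congr_deriv ?_
    simp only [Nat.add_sub_cancel, Pi.neg_apply]
    push_cast
    ring
  have hint := integral_eq_zero_of_hasDerivAt_of_integrable hderiv
    (((integrable_pow_mul_exp_neg_sq_div_two n).const_mul _).sub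
      (integrable_pow_mul_exp_neg_sq_div_two (n + 2)))
    (integrable_pow_mul_exp_neg_sq_div_two (n + 1))
  rw [integral_sub ((integrable_pow_mul_exp_neg_sq_div_two n).const_mul _)
    (integrable_pow_mul_exp_neg_sq_div_two (n + 2)), integral_const_mul] at hint
  linarith

def chiSqMoment (a : ℝ) (q : ℕ) : ℝ := ∏ i ∈ range q, (a + 2 * i)

lemma chiSqMoment_nonneg {a : ℝ} (ha : 0 ≤ a) (q : ℕ) : 0 ≤ chiSqMoment a q :=
  prod_nonneg fun i _ => by positivity

open Polynomial in
lemma chiSqMoment_eq_descPochhammer (a : ℝ) (q : ℕ) :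
    chiSqMoment a q = (-2) ^ q * (descPochhammer ℤ q).smeval (-a / 2) := by
  induction q with
  | zero => simp [chiSqMoment]
  | succ q ih =>
    rw [chiSqMoment, prod_range_succ, ← chiSqMoment, ih, descPochhammer_succ_right, smeval_mul,
      smeval_sub, smeval_X, smeval_natCast]
    simp only [pow_one, pow_zero, nsmul_eq_mul, mul_one]
    ring

lemma chiSqMoment_add (a b : ℝ) (q : ℕ) :
    chiSqMoment (a + b) q
      = ∑ ij ∈ antidiagonal q, q.choose ij.1 * (chiSqMoment a ij.1 * chiSqMoment b ij.2) := by
  simp only [chiSqMoment_eq_descPochhammer, neg_add, add_div]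
  rw [Ring.descPochhammer_smeval_add _ (Commute.all (-a / 2) (-b / 2)), mul_sum]
  refine sum_congr rfl fun ij hij => ?_
  rw [← mem_antidiagonal.mp hij, pow_add]
  ring

lemma chiSqMoment_le_pow {a : ℝ} (ha : 0 ≤ a) {q k : ℕ} (hqk : 2 * q ≤ k + 2) :
    chiSqMoment a q ≤ (a + k) ^ q := by
  calc chiSqMoment a q ≤ ∏ _i ∈ range q, (a + k) :=
        prod_le_prod (fun i _ => by positivity) fun i hi => by
          have : 2 * i ≤ k := by have := mem_range.mp hi; omega
          have : (2 * i : ℝ) ≤ k := by exact_mod_cast this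
          linarith
    _ = (a + k) ^ q := by rw [prod_const, card_range]

lemma integral_pow_two_mul_gaussianReal (j : ℕ) :
    ∫ x, x ^ (2 * j) ∂gaussianReal 0 1 = chiSqMoment 1 j := by
  induction j with
  | zero => simp [chiSqMoment]
  | succ j ih =>
    simp only [integral_gaussianReal_eq_integral_smul one_ne_zero, gaussianPDFReal, smul_eq_mul,
      NNReal.coe_one, sub_zero, mul_one, mul_assoc, integral_const_mul] at ih ⊢
    simp_rw [mul_comm (Real.exp _)] at ih ⊢
    rw [show 2 * (j + 1) = 2 * j + 2 by ring, integral_pow_add_two_mul_exp_neg_sq_div_two,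
      mul_left_comm, ih, chiSqMoment, chiSqMoment, prod_range_succ]
    push_cast
    ring

lemma lintegral_sq_pow_gaussianReal (j : ℕ) :
    ∫⁻ x, ENNReal.ofReal (x ^ 2) ^ j ∂gaussianReal 0 1 = ENNReal.ofReal (chiSqMoment 1 j) := by
  have hint : Integrable (fun x : ℝ => x ^ (2 * j)) (gaussianReal 0 1) :=
    (memLp_id_gaussianReal (2 * j : ℕ)).integrable_norm_pow'.congr
      (ae_of_all _ fun x => by simp [pow_mul])
  simp_rw [← ENNReal.ofReal_pow (sq_nonneg _), ← pow_mul]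
  rw [← ofReal_integral_eq_lintegral_ofReal hint
    (ae_of_all _ fun x => show 0 ≤ x ^ (2 * j) by rw [pow_mul]; positivity),
    integral_pow_two_mul_gaussianReal]

lemma lintegral_sum_sq_pow_pi_gaussianReal (d q : ℕ) :
    ∫⁻ y, ENNReal.ofReal (∑ i, y i ^ 2) ^ q ∂(Measure.pi fun _ : Fin d => gaussianReal 0 1)
      = ENNReal.ofReal (chiSqMoment d q) := by
  induction d generalizing q with
  | zero => cases q <;> simp [chiSqMoment, prod_range_succ']
  | succ d ih =>
    have hmeas : ∀ n, Measurable fun w : Fin n → ℝ => ENNReal.ofReal (∑ i, w i ^ 2) :=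
      fun n => (measurable_sum _ fun i _ => (measurable_pi_apply i).pow_const 2).ennreal_ofReal
    have hbinom : ∀ a b : ℝ≥0∞,
        (a + b) ^ q = ∑ ij ∈ antidiagonal q, (q.choose ij.1 : ℝ≥0∞) * (a ^ ij.1 * b ^ ij.2) :=
      fun a b => by simp only [(Commute.all a b).add_pow', nsmul_eq_mul]
    rw [← (measurePreserving_piFinSuccAbove (fun _ => gaussianReal 0 1) 0).symm.lintegral_comp
      ((hmeas _).pow_const q)]
    simp only [MeasurableEquiv.piFinSuccAbove_symm_apply, Fin.insertNthEquiv, Equiv.coe_fn_mk,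
      Fin.insertNth_zero', Fin.sum_univ_succ, Fin.cons_zero, Fin.cons_succ]
    simp_rw [ENNReal.ofReal_add (sq_nonneg _) (sum_nonneg fun i _ => sq_nonneg _), hbinom]
    rw [lintegral_finsetSum _ fun ij _ => by fun_prop]
    calc _ = ∑ ij ∈ antidiagonal q, (q.choose ij.1 : ℝ≥0∞) *
          (ENNReal.ofReal (chiSqMoment 1 ij.1) * ENNReal.ofReal (chiSqMoment d ij.2)) := by
          refine sum_congr rfl fun ij _ => ?_
          rw [lintegral_const_mul _ (by fun_prop),
            lintegral_prod_mul (f := fun t => ENNReal.ofReal (t ^ 2) ^ ij.1)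
              (g := fun w : Fin d → ℝ => ENNReal.ofReal (∑ i, w i ^ 2) ^ ij.2) (by fun_prop)
              ((hmeas d).pow_const _).aemeasurable,
            lintegral_sq_pow_gaussianReal, ih]
      _ = ENNReal.ofReal (chiSqMoment (d + 1 : ℕ) q) := by
          have h1 := chiSqMoment_nonneg zero_le_one
          have hd := chiSqMoment_nonneg d.cast_nonneg
          rw [Nat.cast_succ, add_comm, chiSqMoment_add,
            ENNReal.ofReal_sum_of_nonneg fun ij _ =>
              mul_nonneg (Nat.cast_nonneg _) (mul_nonneg (h1 _) (hd _))]
          refine sum_congr rfl fun ij _ => ?_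
          rw [ENNReal.ofReal_mul (by positivity), ENNReal.ofReal_mul (h1 _), ENNReal.ofReal_natCast]

lemma lintegral_norm_sq_pow_stdGaussian (d q : ℕ) :
    ∫⁻ u, ENNReal.ofReal (‖u‖ ^ 2) ^ q ∂stdGaussian d = ENNReal.ofReal (chiSqMoment d q) := by
  rw [stdGaussian, lintegral_map (by fun_prop) (MeasurableEquiv.toLp 2 (Fin d → ℝ)).measurable,
    ← lintegral_sum_sq_pow_pi_gaussianReal]
  simp [EuclideanSpace.norm_sq_eq]

lemma lintegral_rpow_le_rpow_lintegral {α : Type*} [MeasurableSpace α] {μ : Measure α}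
    [IsProbabilityMeasure μ] {f : α → ℝ≥0∞} (hf : AEMeasurable f μ) {p : ℝ} (hp0 : 0 ≤ p)
    (hp1 : p ≤ 1) : ∫⁻ a, f a ^ p ∂μ ≤ (∫⁻ a, f a ∂μ) ^ p := by
  simpa using ENNReal.lintegral_mul_norm_pow_le hf aemeasurable_const hp0 (sub_nonneg.2 hp1)
    (add_sub_cancel p 1) (g := 1)

lemma lintegral_norm_pow_stdGaussian_le (d k : ℕ) :
    ∫⁻ u, ENNReal.ofReal (‖u‖ ^ k) ∂stdGaussian d
      ≤ ENNReal.ofReal (((k + d : ℕ) : ℝ) ^ ((k : ℝ) / 2)) := by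
  rcases Nat.eq_zero_or_pos k with rfl | hk
  · simp
  obtain ⟨q, hq, hkq⟩ : ∃ q : ℕ, k ≤ 2 * q ∧ 2 * q ≤ k + 1 := ⟨(k + 1) / 2, by omega, by omega⟩
  have hq0 : (0 : ℝ) < q := by norm_cast; omega
  set r : ℝ := k / (2 * q) with hr
  have hr0 : 0 ≤ r := by positivity
  have hr1 : r ≤ 1 := div_le_one_of_le₀ (by exact_mod_cast hq) (by positivity)
  have hpow : ∀ t : ℝ, 0 ≤ t → (ENNReal.ofReal (t ^ 2) ^ q) ^ r = ENNReal.ofReal (t ^ k) := by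
    intro t ht
    rw [← ENNReal.ofReal_pow (sq_nonneg t), ← pow_mul,
      ENNReal.ofReal_rpow_of_nonneg (by positivity) hr0, ← Real.rpow_natCast, ← Real.rpow_mul ht,
      ← Real.rpow_natCast t k, hr]
    congr 2
    push_cast
    field_simp
  calc ∫⁻ u, ENNReal.ofReal (‖u‖ ^ k) ∂stdGaussian d
      = ∫⁻ u, (ENNReal.ofReal (‖u‖ ^ 2) ^ q) ^ r ∂stdGaussian d := by
        simp_rw [hpow _ (norm_nonneg _)]
    _ ≤ ENNReal.ofReal (chiSqMoment d q) ^ r := by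
        rw [← lintegral_norm_sq_pow_stdGaussian]
        exact lintegral_rpow_le_rpow_lintegral (by fun_prop) hr0 hr1
    _ ≤ ENNReal.ofReal ((d + k : ℝ) ^ q) ^ r := by
        gcongr
        exact chiSqMoment_le_pow d.cast_nonneg (by omega)
    _ = ENNReal.ofReal (((k + d : ℕ) : ℝ) ^ ((k : ℝ) / 2)) := by
        rw [ENNReal.ofReal_rpow_of_nonneg (by positivity) hr0, ← Real.rpow_natCast,
          ← Real.rpow_mul (by positivity)]
        congr 2
        · push_cast; ring
        · rw [hr]
          field_simp

lemma lintegral_mul_norm_pow_add_mul_norm_pow_stdGaussian_le (d : ℕ) {a b : ℝ} (ha : 0 ≤ a)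
    (hb : 0 ≤ b) (k l : ℕ) :
    ∫⁻ u, ENNReal.ofReal (a * ‖u‖ ^ k + b * ‖u‖ ^ l) ∂stdGaussian d
      ≤ ENNReal.ofReal (a * ((k + d : ℕ) : ℝ) ^ ((k : ℝ) / 2)
        + b * ((l + d : ℕ) : ℝ) ^ ((l : ℝ) / 2)) := by
  have hsplit : ∀ u : EuclideanSpace ℝ (Fin d), ENNReal.ofReal (a * ‖u‖ ^ k + b * ‖u‖ ^ l)
      = ENNReal.ofReal a * ENNReal.ofReal (‖u‖ ^ k)
        + ENNReal.ofReal b * ENNReal.ofReal (‖u‖ ^ l) :=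
    fun u => by rw [ENNReal.ofReal_add (by positivity) (by positivity), ENNReal.ofReal_mul ha,
      ENNReal.ofReal_mul hb]
  simp_rw [hsplit]
  rw [lintegral_add_left (by fun_prop), lintegral_const_mul _ (by fun_prop),
    lintegral_const_mul _ (by fun_prop), ENNReal.ofReal_add (by positivity) (by positivity),
    ENNReal.ofReal_mul ha, ENNReal.ofReal_mul hb]
  gcongr <;> exact lintegral_norm_pow_stdGaussian_le d _

lemma add_add_pow_le {a b c : ℝ} (ha : 0 ≤ a) (hb : 0 ≤ b) (hc : 0 ≤ c) (n : ℕ) :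
    (a + b + c) ^ n ≤ 3 ^ (n - 1) * (a ^ n + b ^ n + c ^ n) := by
  cases n with
  | zero => norm_num
  | succ n =>
    have h := pow_sum_le_card_mul_sum_pow (s := univ) (f := ![a, b, c])
      (by simp [Fin.forall_fin_succ, ha, hb, hc]) n
    simpa [Fin.sum_univ_three] using h

section SPBGrowth

variable {d : ℕ} {f : EuclideanSpace ℝ (Fin d) → ℝ} {R1 R2 : ℝ} {m : ℕ}

lemma SPBGrowth.norm_smul_le (hf : SPBGrowth f R1 R2 m) {σ : ℝ} (hσ : 0 < σ)
    (x u : EuclideanSpace ℝ (Fin d)) :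
    ‖(σ⁻¹ * (f (x + σ • u) - f x)) • u‖
      ≤ ((2 : ℝ) ^ ((m : ℤ) - 1) * R1 * ‖x‖ ^ m
          + (2 : ℝ) ^ ((m : ℤ) - 1) * R1 * σ ^ m * ‖u‖ ^ m + R2) * ‖u‖ ^ 2 := by
  have h := hf x (x + σ • u)
  rw [abs_sub_comm, add_sub_cancel_left, sub_add_cancel_left, norm_neg, norm_smul,
    Real.norm_of_nonneg hσ.le, mul_pow] at h
  rw [norm_smul, norm_mul, norm_inv, Real.norm_of_nonneg hσ.le, Real.norm_eq_abs]
  calc σ⁻¹ * |f (x + σ • u) - f x| * ‖u‖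
      ≤ σ⁻¹ * (((2 : ℝ) ^ ((m : ℤ) - 1) * R1 * ‖x‖ ^ m
          + (2 : ℝ) ^ ((m : ℤ) - 1) * R1 * (σ ^ m * ‖u‖ ^ m) + R2) * (σ * ‖u‖)) * ‖u‖ := by
        gcongr
    _ = _ := by field_simp

lemma SPBGrowth.norm_smul_pow_le (hf : SPBGrowth f R1 R2 m) (hR1 : 0 ≤ R1) (hR2 : 0 ≤ R2)
    {σ : ℝ} (hσ : 0 < σ) (x u : EuclideanSpace ℝ (Fin d)) (p : ℕ) :
    ‖(σ⁻¹ * (f (x + σ • u) - f x)) • u‖ ^ p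
      ≤ 3 ^ (p - 1) * (((2 : ℝ) ^ ((m : ℤ) - 1) * R1) ^ p * ‖x‖ ^ (m * p) + R2 ^ p)
          * ‖u‖ ^ (2 * p)
        + 3 ^ (p - 1) * (((2 : ℝ) ^ ((m : ℤ) - 1) * R1) ^ p * σ ^ (m * p))
          * ‖u‖ ^ ((m + 2) * p) := by
  set A := (2 : ℝ) ^ ((m : ℤ) - 1) * R1
  have hA : 0 ≤ A := by positivity
  calc ‖(σ⁻¹ * (f (x + σ • u) - f x)) • u‖ ^ p
      ≤ (A * ‖x‖ ^ m * ‖u‖ ^ 2 + A * σ ^ m * ‖u‖ ^ (m + 2) + R2 * ‖u‖ ^ 2) ^ p := by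
        gcongr
        refine (hf.norm_smul_le hσ x u).trans_eq ?_
        ring
    _ ≤ 3 ^ (p - 1) * ((A * ‖x‖ ^ m * ‖u‖ ^ 2) ^ p + (A * σ ^ m * ‖u‖ ^ (m + 2)) ^ p
          + (R2 * ‖u‖ ^ 2) ^ p) :=
        add_add_pow_le (by positivity) (by positivity) (by positivity) p
    _ = _ := by ring

end SPBGrowth

lemma spbH_eq (d m p : ℕ) (R1 R2 σ : ℝ) :
    spbH d m p R1 R2 σ = 3 ^ (p - 1) *
      max (((2 : ℝ) ^ ((m : ℤ) - 1) * R1) ^ p * ((2 * p + d : ℕ) : ℝ) ^ p)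
        (R2 ^ p * ((2 * p + d : ℕ) : ℝ) ^ p
          + ((2 : ℝ) ^ ((m : ℤ) - 1) * R1) ^ p * σ ^ (m * p)
            * (((m + 2) * p + d : ℕ) : ℝ) ^ ((((m + 2) * p : ℕ) : ℝ) / 2)) := by
  rw [spbH, mul_pow, ← zpow_natCast ((2 : ℝ) ^ ((m : ℤ) - 1)), ← zpow_mul]

lemma add_mul_le_max_mul_add_one {a b x : ℝ} (hx : 0 ≤ x) : a * x + b ≤ max a b * (x + 1) := by
  nlinarith [le_max_left a b, le_max_right a b]

lemma mul_add_mul_le_spbH_mul (d m p : ℕ) (R1 R2 σ : ℝ) {X : ℝ} (hX : 0 ≤ X) :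
    3 ^ (p - 1) * (((2 : ℝ) ^ ((m : ℤ) - 1) * R1) ^ p * X + R2 ^ p)
        * ((2 * p + d : ℕ) : ℝ) ^ (((2 * p : ℕ) : ℝ) / 2)
      + 3 ^ (p - 1) * (((2 : ℝ) ^ ((m : ℤ) - 1) * R1) ^ p * σ ^ (m * p))
        * (((m + 2) * p + d : ℕ) : ℝ) ^ ((((m + 2) * p : ℕ) : ℝ) / 2)
      ≤ spbH d m p R1 R2 σ * (X + 1) := by
  rw [spbH_eq, show (((2 * p : ℕ) : ℝ) / 2) = (p : ℕ) by push_cast; ring, Real.rpow_natCast]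
  set A := (2 : ℝ) ^ ((m : ℤ) - 1) * R1
  set P := ((2 * p + d : ℕ) : ℝ) ^ p
  set Q := (((m + 2) * p + d : ℕ) : ℝ) ^ ((((m + 2) * p : ℕ) : ℝ) / 2)
  calc _ = 3 ^ (p - 1) * (A ^ p * P * X + (R2 ^ p * P + A ^ p * σ ^ (m * p) * Q)) := by ring
    _ ≤ 3 ^ (p - 1) * (max (A ^ p * P) (R2 ^ p * P + A ^ p * σ ^ (m * p) * Q) * (X + 1)) := by
        gcongr
        exact add_mul_le_max_mul_add_one hX
    _ = _ := by ring

theorem gs_estimator_moment_bound_general {d : ℕ} (f : EuclideanSpace ℝ (Fin d) → ℝ)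
    (R1 R2 : ℝ) (m : ℕ) (hR1 : 0 ≤ R1) (hR2 : 0 < R2)
    (hf : SPBGrowth f R1 R2 m) (σ : ℝ) (hσ : 0 < σ) (x : EuclideanSpace ℝ (Fin d))
    (p : ℕ) :
    (∫⁻ u, ENNReal.ofReal (‖(σ⁻¹ * (f (x + σ • u) - f x)) • u‖ ^ p) ∂(stdGaussian d))
      ≤ ENNReal.ofReal (spbH d m p R1 R2 σ * (‖x‖ ^ (m * p) + 1)) := by
  calc _ ≤ _ := lintegral_mono fun u =>
        ENNReal.ofReal_le_ofReal (hf.norm_smul_pow_le hR1 hR2.le hσ x u p)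
    _ ≤ _ := lintegral_mul_norm_pow_add_mul_norm_pow_stdGaussian_le d (by positivity)
        (by positivity) _ _
    _ ≤ _ := ENNReal.ofReal_le_ofReal
        (mul_add_mul_le_spbH_mul d m p R1 R2 σ (by positivity))

/-- Lemma 4.3. Moment bound for `F(u) = σ⁻¹ (f (x + σu) - f x) u`:
`E[‖F(u)‖^p] ≤ ℋ_(p) (‖x‖^{mp} + 1)`. -/
theorem gs_estimator_moment_bound {d : ℕ} (hd : 1 ≤ d) (f : EuclideanSpace ℝ (Fin d) → ℝ)
    (R1 R2 : ℝ) (m : ℕ) (hR1 : 0 ≤ R1) (hR2 : 0 < R2) (hR1m : R1 = 0 ↔ m = 0)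
    (hf : SPBGrowth f R1 R2 m) (σ : ℝ) (hσ : 0 < σ) (x : EuclideanSpace ℝ (Fin d))
    (p : ℕ) (hp : 1 ≤ p) :
    (∫⁻ u, ENNReal.ofReal (‖(σ⁻¹ * (f (x + σ • u) - f x)) • u‖ ^ p) ∂(stdGaussian d))
      ≤ ENNReal.ofReal (spbH d m p R1 R2 σ * (‖x‖ ^ (m * p) + 1)) :=
  gs_estimator_moment_bound_general f R1 R2 m hR1 hR2 hf σ hσ x p
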